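/- arXiv:1512.02709 — 2 statements merged into one kernel-verified Lean document; each statement's English description precedes it below -/
import Mathlib

section
/- For all positive integers m, n, every BQAP1 instance (q, c, d), and every feasible solution (σ,τ), there exist a : Fin n and b : Fin m with f1(σ_a, τ_b) ≥ A1(q,c,d), and there exist a' : Fin n and b' : Fin m with f1(σ_{a'}, τ_{b'}) ≤ A1(q,c,d), where σ_a(i) = σ(i) + a and τ_b(l) = τ(l) + b (addition in Fin n and Fin m, i.e. cyclic shifts modulo n and m). -/
/-- Objective function of BQAP1. -/
noncomputable def f1 {m n : ℕ} (q : Fin m → Fin n → Fin m → Fin n → ℝ)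
    (c d : Fin m → Fin n → ℝ) (σ : Fin m → Fin n) (τ : Fin n → Fin m) : ℝ :=
  (∑ i, ∑ l, q i (σ i) (τ l) l) + (∑ i, c i (σ i)) + (∑ l, d (τ l) l)

/-- Average objective value of BQAP1. -/
noncomputable def A1 {m n : ℕ} (q : Fin m → Fin n → Fin m → Fin n → ℝ)
    (c d : Fin m → Fin n → ℝ) : ℝ :=
  (1 / ((m : ℝ) * n)) * (∑ i, ∑ j, ∑ k, ∑ l, q i j k l)
    + (1 / (n : ℝ)) * (∑ i, ∑ j, c i j)
    + (1 / (m : ℝ)) * (∑ i, ∑ j, d i j)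

/-!
Averaging over cyclic shifts. As `a` runs over `Fin n` and `b` over `Fin m`, the shifted
solutions `(σ + a, τ + b)` take every value `(j, k)` exactly once in each cross term
`q i (σ i + a) (τ l + b) l`, every `j` exactly once in `c i (σ i + a)` and every `k` exactly
once in `d (τ l + b) l`. So the `n·m` shifted objective values add up to `n·m·A1`, and some
of them lie on either side of their mean.
-/

open Finset

theorem exists_le_and_exists_ge_of_sum_eq_card_nsmul {ι M : Type*} [Fintype ι] [Nonempty ι]
    [AddCommMonoid M] [LinearOrder M] [IsOrderedCancelAddMonoid M] {f : ι → M} {A : M}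
    (h : ∑ i, f i = Fintype.card ι • A) : (∃ i, A ≤ f i) ∧ ∃ i, f i ≤ A := by
  have hconst : ∑ _i : ι, A = ∑ i, f i := by rw [h, sum_const, card_univ]
  obtain ⟨i, -, hi⟩ := exists_le_of_sum_le univ_nonempty hconst.le
  obtain ⟨j, -, hj⟩ := exists_le_of_sum_le univ_nonempty hconst.ge
  exact ⟨⟨i, hi⟩, j, hj⟩

section Shifts

variable {ι κ G H M : Type*} [Fintype ι] [Fintype κ] [AddGroup G] [Fintype G] [AddGroup H]
  [Fintype H] [AddCommMonoid M]

theorem sum_shifts_linear (c : ι → G → M) (σ : ι → G) :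
    ∑ a, ∑ i, c i (σ i + a) = ∑ i, ∑ j, c i j := by
  rw [sum_comm]
  exact sum_congr rfl fun i _ => Equiv.sum_comp (Equiv.addLeft (σ i)) (c i)

theorem sum_shifts_quadratic (q : ι → G → H → κ → M) (σ : ι → G) (τ : κ → H) :
    ∑ a, ∑ b, ∑ i, ∑ l, q i (σ i + a) (τ l + b) l = ∑ i, ∑ j, ∑ k, ∑ l, q i j k l := by
  calc ∑ a, ∑ b, ∑ i, ∑ l, q i (σ i + a) (τ l + b) l
      = ∑ a, ∑ i, ∑ l, ∑ b, q i (σ i + a) (τ l + b) l := by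
        refine sum_congr rfl fun a _ => ?_
        rw [sum_comm]
        exact sum_congr rfl fun i _ => sum_comm
    _ = ∑ i, ∑ a, ∑ l, ∑ k, q i (σ i + a) k l := by
        rw [sum_comm]
        exact sum_congr rfl fun i _ => sum_congr rfl fun a _ => sum_congr rfl fun l _ =>
          Equiv.sum_comp (Equiv.addLeft (τ l)) (fun k => q i (σ i + a) k l)
    _ = ∑ i, ∑ j, ∑ k, ∑ l, q i j k l :=
        sum_congr rfl fun i _ =>
          (Equiv.sum_comp (Equiv.addLeft (σ i)) (fun j => ∑ l, ∑ k, q i j k l)).trans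
            (sum_congr rfl fun j _ => sum_comm)

end Shifts

theorem sum_shifts_f1 {m n : ℕ} [NeZero m] [NeZero n]
    (q : Fin m → Fin n → Fin m → Fin n → ℝ) (c d : Fin m → Fin n → ℝ)
    (σ : Fin m → Fin n) (τ : Fin n → Fin m) :
    ∑ a, ∑ b, f1 q c d (fun i => σ i + a) (fun l => τ l + b) = (n * m : ℕ) • A1 q c d := by
  have hc : ∑ a, ∑ _b : Fin m, ∑ i, c i (σ i + a) = m • ∑ i, ∑ j, c i j := by
    simp only [sum_const, card_univ, Fintype.card_fin, ← smul_sum, sum_shifts_linear]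
  have hd : ∑ _a : Fin n, ∑ b, ∑ l, d (τ l + b) l = n • ∑ i, ∑ j, d i j := by
    rw [sum_const, card_univ, Fintype.card_fin,
      (sum_shifts_linear (fun l k => d k l) τ).trans sum_comm]
  simp only [f1, sum_add_distrib, sum_shifts_quadratic, hc, hd, A1, nsmul_eq_mul, Nat.cast_mul]
  have hm : (m : ℝ) ≠ 0 := NeZero.ne _
  have hn : (n : ℝ) ≠ 0 := NeZero.ne _
  field_simp

theorem shifts_above_and_below_average_BQAP1 (m n : ℕ) (hm : 0 < m) (hn : 0 < n)
    (q : Fin m → Fin n → Fin m → Fin n → ℝ) (c d : Fin m → Fin n → ℝ)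
    (σ : Fin m → Fin n) (τ : Fin n → Fin m) :
    (∃ (a : Fin n) (b : Fin m),
        f1 q c d (fun i => σ i + a) (fun l => τ l + b) ≥ A1 q c d) ∧
    (∃ (a' : Fin n) (b' : Fin m),
        f1 q c d (fun i => σ i + a') (fun l => τ l + b') ≤ A1 q c d) := by
  have : NeZero m := ⟨hm.ne'⟩
  have : NeZero n := ⟨hn.ne'⟩
  have hsum : ∑ p : Fin n × Fin m, f1 q c d (fun i => σ i + p.1) (fun l => τ l + p.2)
      = Fintype.card (Fin n × Fin m) • A1 q c d := by
    rw [Fintype.sum_prod_type, sum_shifts_f1, Fintype.card_prod, Fintype.card_fin,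
      Fintype.card_fin]
  obtain ⟨⟨⟨a, b⟩, hab⟩, ⟨a', b'⟩, hab'⟩ := exists_le_and_exists_ge_of_sum_eq_card_nsmul hsum
  exact ⟨⟨a, b, hab⟩, a', b', hab'⟩
end

section
/- For all positive integers m, n and every BQAP2 instance (q, c, d): min over a : Fin m, b : Fin n of f2(σ^a, τ^b) ≤ A2(q,c,d) ≤ max over a : Fin m, b : Fin n of f2(σ^a, τ^b), where (σ^a, τ^b) is the constant feasible solution with σ^a(i) = a for all i and τ^b(l) = b for all l. -/
/-- Objective function of BQAP2. -/
noncomputable def f2 {m n : ℕ} (q : Fin m → Fin m → Fin n → Fin n → ℝ)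
    (c : Fin m → Fin m → ℝ) (d : Fin n → Fin n → ℝ)
    (σ : Fin m → Fin m) (τ : Fin n → Fin n) : ℝ :=
  (∑ i, ∑ l, q i (σ i) (τ l) l) + (∑ i, c i (σ i)) + (∑ l, d (τ l) l)

/-- Average objective value of BQAP2. -/
noncomputable def A2 {m n : ℕ} (q : Fin m → Fin m → Fin n → Fin n → ℝ)
    (c : Fin m → Fin m → ℝ) (d : Fin n → Fin n → ℝ) : ℝ :=
  (1 / ((m : ℝ) * n)) * (∑ i, ∑ j, ∑ k, ∑ l, q i j k l)
    + (1 / (m : ℝ)) * (∑ i, ∑ j, c i j)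
    + (1 / (n : ℝ)) * (∑ i, ∑ j, d i j)

/-!
Every entry `q i j k l` occurs in exactly one constant solution, `(σ^j, τ^k)`; every `c i j`
occurs in the `n` constant solutions `(σ^j, τ^b)`, and every `d k l` in the `m` solutions
`(σ^a, τ^k)`. Hence `A2` is the mean of `f2` over the `m · n` constant solutions, and a mean
lies between the minimum and the maximum.
-/

open Finset
open scoped BigOperators

namespace Finset

variable {ι α : Type*} [AddCommMonoid α] [Lattice α] [IsOrderedAddMonoid α]
  [Module ℚ≥0 α] [PosSMulMono ℚ≥0 α] {s : Finset ι}

lemma inf'_le_expect (hs : s.Nonempty) (f : ι → α) : s.inf' hs f ≤ 𝔼 i ∈ s, f i :=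
  le_expect hs fun _ hi => inf'_le f hi

lemma expect_le_sup' (hs : s.Nonempty) (f : ι → α) : 𝔼 i ∈ s, f i ≤ s.sup' hs f :=
  expect_le hs fun _ hi => le_sup' f hi

end Finset

section BQAP2

variable {m n : ℕ} (q : Fin m → Fin m → Fin n → Fin n → ℝ) (c : Fin m → Fin m → ℝ)
  (d : Fin n → Fin n → ℝ)

lemma sum_f2_const :
    ∑ ab : Fin m × Fin n, f2 q c d (fun _ => ab.1) (fun _ => ab.2)
      = ∑ i, ∑ j, ∑ k, ∑ l, q i j k l + (n : ℝ) * ∑ i, ∑ j, c i j + (m : ℝ) * ∑ i, ∑ j, d i j := by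
  simp only [f2, Fintype.sum_prod_type, sum_add_distrib, sum_const, card_univ,
    Fintype.card_fin, nsmul_eq_mul, ← mul_sum]
  congr 2
  · exact (sum_congr rfl fun _ _ => sum_comm).trans sum_comm
  · rw [sum_comm]

lemma A2_eq_expect_f2_const (hm : 0 < m) (hn : 0 < n) :
    A2 q c d = 𝔼 ab : Fin m × Fin n, f2 q c d (fun _ => ab.1) (fun _ => ab.2) := by
  rw [Fintype.expect_eq_sum_div_card, sum_f2_const, A2]
  simp only [Fintype.card_prod, Fintype.card_fin, Nat.cast_mul]
  field_simp

end BQAP2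

theorem min_max_constant_solutions_BQAP2 (m n : ℕ) (hm : 0 < m) (hn : 0 < n)
    (q : Fin m → Fin m → Fin n → Fin n → ℝ)
    (c : Fin m → Fin m → ℝ) (d : Fin n → Fin n → ℝ) :
    Finset.univ.inf' ⟨((⟨0, hm⟩ : Fin m), (⟨0, hn⟩ : Fin n)), Finset.mem_univ _⟩
        (fun ab : Fin m × Fin n => f2 q c d (fun _ => ab.1) (fun _ => ab.2))
      ≤ A2 q c d ∧
    A2 q c d ≤
      Finset.univ.sup' ⟨((⟨0, hm⟩ : Fin m), (⟨0, hn⟩ : Fin n)), Finset.mem_univ _⟩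
        (fun ab : Fin m × Fin n => f2 q c d (fun _ => ab.1) (fun _ => ab.2)) := by
  rw [A2_eq_expect_f2_const q c d hm hn]
  exact ⟨inf'_le_expect _ _, expect_le_sup' _ _⟩
end
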